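/- arXiv:math/0610169 — 2 statements merged into one kernel-verified Lean document; each statement's English description precedes it below -/
import Mathlib

section
/- Let $k=1$ and $G=\mathbb{C}^{\times}\times SL_2(\mathbb{C})$, let $V=V_{1,1}\oplus V_{1,4}\oplus V_{2,4}\oplus V_{3,3}\oplus V_{4,2}$, and for $d\in\mathbb{C}$ set $w(d)=\langle(0,\;0,\;(d+1)^2x^4,\;d(d+1)x^3,\;x^2)\rangle\in\mathbb{P}(V)$. Then for every $d_1\in\mathbb{C}$ the set $\{d_2\in\mathbb{C}:w(d_2)\in G\,w(d_1)\}$ is finite; consequently the family $\{w(d):d\in\mathbb{C}\}$ meets infinitely many distinct $G$-orbits. -/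
open scoped BigOperators

noncomputable section

/-- `SL₂(ℂ)`. -/
abbrev SL2 : Type := Matrix.SpecialLinearGroup (Fin 2) ℂ

/-- The coefficient space of `V = ⊕ᵢ V_{χᵢ,nᵢ}`: the `i`-th component is the space of
binary forms of degree `n i`, recorded by its `n i + 1` coefficients. -/
abbrev BinVec {s : ℕ} (n : Fin s → ℕ) : Type := (i : Fin s) → Fin (n i + 1) → ℂ

/-- The exponent multiset of the monomial `x^(n-j) y^j`. -/
def monExp (n j : ℕ) : Fin 2 →₀ ℕ :=
  Finsupp.single (0 : Fin 2) (n - j) + Finsupp.single (1 : Fin 2) j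

/-- The binary form of degree `n` with coefficient vector `c`:
`∑ⱼ c j • x^(n-j) y^j`, as a polynomial in the two variables `X 0 = x`, `X 1 = y`. -/
def toPoly {n : ℕ} (c : Fin (n + 1) → ℂ) : MvPolynomial (Fin 2) ℂ :=
  ∑ j : Fin (n + 1), MvPolynomial.monomial (monExp n (j : ℕ)) (c j)

/-- The coefficient vector of (the degree-`n` homogeneous part of) a polynomial. -/
def ofPoly (n : ℕ) (f : MvPolynomial (Fin 2) ℂ) : Fin (n + 1) → ℂ :=
  fun j => MvPolynomial.coeff (monExp n (j : ℕ)) f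

/-- The substitution action of `SL₂(ℂ)` on binary forms:
`f(x,y) ↦ f(κx + μy, λx + νy)` for `g = !![κ, λ; μ, ν]`. -/
def subst (g : SL2) (f : MvPolynomial (Fin 2) ℂ) : MvPolynomial (Fin 2) ℂ :=
  MvPolynomial.aeval
    (fun j : Fin 2 =>
      MvPolynomial.C ((g : Matrix (Fin 2) (Fin 2) ℂ) 0 j) * MvPolynomial.X 0 +
      MvPolynomial.C ((g : Matrix (Fin 2) (Fin 2) ℂ) 1 j) * MvPolynomial.X 1) f

/-- The value `χ(t) = t₁^{χ⁽¹⁾} ⋯ t_k^{χ⁽ᵏ⁾}` of the character `χ ∈ ℤᵏ` at `t ∈ (ℂˣ)ᵏ`. -/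
def charVal {k : ℕ} (χ : Fin k → ℤ) (t : Fin k → ℂˣ) : ℂ :=
  ∏ j, ((t j : ℂ) ^ χ j)

/-- The action of `G = (ℂˣ)ᵏ × SL₂(ℂ)` on `V = ⊕ᵢ V_{χᵢ,nᵢ}`. -/
def Gact {k s : ℕ} (χ : Fin s → Fin k → ℤ) (n : Fin s → ℕ)
    (g : (Fin k → ℂˣ) × SL2) (v : BinVec n) : BinVec n :=
  fun i => ofPoly (n i) (MvPolynomial.C (charVal (χ i) g.1) * subst g.2 (toPoly (v i)))

/-- The `G`-orbit of `v ∈ V`. -/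
def Gorbit {k s : ℕ} (χ : Fin s → Fin k → ℤ) (n : Fin s → ℕ) (v : BinVec n) :
    Set (BinVec n) :=
  {w | ∃ g : (Fin k → ℂˣ) × SL2, w = Gact χ n g v}

/-- The upper triangular element `!![κ, l; 0, κ⁻¹]` of `SL₂(ℂ)`. -/
def upperSL (κ : ℂˣ) (l : ℂ) : SL2 :=
  ⟨!![(κ : ℂ), l; 0, ((κ⁻¹ : ℂˣ) : ℂ)], by
    rw [Matrix.det_fin_two_of]; simp⟩

/-- The orbit of `v ∈ V` under the Borel subgroup
`B = (ℂˣ)ᵏ × {upper triangular matrices} ⊆ G`. -/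
def Borbit {k s : ℕ} (χ : Fin s → Fin k → ℤ) (n : Fin s → ℕ) (v : BinVec n) :
    Set (BinVec n) :=
  {w | ∃ (t : Fin k → ℂˣ) (κ : ℂˣ) (l : ℂ), w = Gact χ n (t, upperSL κ l) v}

/-- The Zariski topology on affine space `ℂ^σ`: generated by the complements of
hypersurfaces, i.e. the closed sets are the zero loci of sets of polynomials. -/
def zTop (σ : Type) : TopologicalSpace (σ → ℂ) :=
  TopologicalSpace.generateFrom
    {U | ∃ p : MvPolynomial σ ℂ, U = {x | MvPolynomial.eval x p ≠ 0}}

/-- The Zariski topology on `V`, transported along the coordinate identification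
`V ≅ ℂ^{Σᵢ (nᵢ+1)}`. -/
def vTop {s : ℕ} (n : Fin s → ℕ) : TopologicalSpace (BinVec n) :=
  TopologicalSpace.induced
    (fun v (q : Σ i : Fin s, Fin (n i + 1)) => v q.1 q.2)
    (zTop (Σ i : Fin s, Fin (n i + 1)))

/-- Zariski closure in `V`. -/
def vClosure {s : ℕ} {n : Fin s → ℕ} (S : Set (BinVec n)) : Set (BinVec n) :=
  @closure _ (vTop n) S

/-- `e(∞) = ∑_{a ∈ ℂ} e(a)` for a multiplicity function `e : ℂ →₀ ℕ`. -/
def eInf (e : ℂ →₀ ℕ) : ℕ := e.sum fun _ m => m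

/-- The normalized binary form `x^(n - e(∞)) ∏_{a ∈ ℂ} (a x + y)^{e(a)}`
attached to a multiplicity function `e`. -/
def normForm (n : ℕ) (e : ℂ →₀ ℕ) : MvPolynomial (Fin 2) ℂ :=
  MvPolynomial.X 0 ^ (n - eInf e) *
    ∏ a ∈ e.support, (MvPolynomial.C a * MvPolynomial.X 0 + MvPolynomial.X 1) ^ e a

/-- The pairing `⟨χ'ᵢ, R⟩` of a characteristic point `χ'ᵢ = (χᵢ, nᵢ) ∈ ℚ^{k+1}` with a
vector `R = (r₁, …, r_k, p) ∈ ℚ^{k+1}`. -/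
def pairQ {k : ℕ} (χi : Fin k → ℤ) (ni : ℕ) (R : (Fin k → ℚ) × ℚ) : ℚ :=
  (∑ j, (χi j : ℚ) * R.1 j) + (ni : ℚ) * R.2

/-- `pᵢ(d) = ∏_{a ∈ ℂ, a ≠ d} (a - d)^{e(a)}`. -/
def pval (e : ℂ →₀ ℕ) (d : ℂ) : ℂ :=
  ∏ a ∈ e.support \ {d}, (a - d) ^ e a

/-- The standard vector `v(d, R)`, whose `i`-th component is `pᵢ(d) x^{nᵢ}` for
`i ∈ I(R) = {i : ⟨χ'ᵢ, R⟩ = 0}` and `0` otherwise. -/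
def standardVec {k s : ℕ} (χ : Fin s → Fin k → ℤ) (n : Fin s → ℕ)
    (e : Fin s → ℂ →₀ ℕ) (d : ℂ) (R : (Fin k → ℚ) × ℚ) : BinVec n :=
  fun i =>
    if pairQ (χ i) (n i) R = 0 then
      ofPoly (n i) (MvPolynomial.C (pval (e i) d) * MvPolynomial.X 0 ^ (n i))
    else 0

/-- The Zariski topology on `ℙ(V)`, coinduced from the Zariski topology on `V ∖ {0}`. -/
def pTop {s : ℕ} (n : Fin s → ℕ) :
    TopologicalSpace (Projectivization ℂ (BinVec n)) :=
  TopologicalSpace.coinduced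
    (fun v : {v : BinVec n // v ≠ 0} => Projectivization.mk ℂ v.1 v.2)
    (TopologicalSpace.induced Subtype.val (vTop n))

/-- Zariski closure in `ℙ(V)`. -/
def pClosure {s : ℕ} {n : Fin s → ℕ} (S : Set (Projectivization ℂ (BinVec n))) :
    Set (Projectivization ℂ (BinVec n)) :=
  @closure _ (pTop n) S

/-- The `G`-orbit of the point `⟨v⟩ ∈ ℙ(V)`. -/
def pOrbit {k s : ℕ} (χ : Fin s → Fin k → ℤ) (n : Fin s → ℕ) (v : BinVec n) :
    Set (Projectivization ℂ (BinVec n)) :=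
  {q | ∃ (g : (Fin k → ℂˣ) × SL2) (h : Gact χ n g v ≠ 0),
      q = Projectivization.mk ℂ (Gact χ n g v) h}
/-- The curve `t ↦ !![t^p, c·h(t)·t^q; 0, t^{-p}]` in `SL₂(ℂ)`. -/
def curveMat (p q : ℤ) (c : ℂ) (h : Polynomial ℂ) (t : ℂˣ) : SL2 :=
  ⟨!![((t ^ p : ℂˣ) : ℂ), c * Polynomial.eval (t : ℂ) h * ((t ^ q : ℂˣ) : ℂ);
      0, ((t ^ (-p) : ℂˣ) : ℂ)], by
    rw [Matrix.det_fin_two_of]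
    simp only [zpow_neg, Units.val_zpow_eq_zpow_val, Units.val_inv_eq_inv_val, mul_zero, sub_zero]
    exact mul_inv_cancel₀ (zpow_ne_zero _ (Units.ne_zero t))⟩

/-- The substitution action of `SL₂(ℂ)` on a binary form of degree `m`,
in coefficient coordinates. -/
def slCoefAct (m : ℕ) (g : SL2) (c : Fin (m + 1) → ℂ) : Fin (m + 1) → ℂ :=
  ofPoly m (subst g (toPoly c))

/-- The (diagonal) substitution action of `SL₂(ℂ)` on `V = ⊕ᵢ V_{nᵢ}`. -/
def slAct {s : ℕ} {n : Fin s → ℕ} (g : SL2) (v : BinVec n) : BinVec n :=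
  fun i => slCoefAct (n i) g (v i)

/-- The `SL₂(ℂ)`-orbit of `⟨v⟩ ∈ ℙ(V)`. -/
def slPOrbit {s : ℕ} (n : Fin s → ℕ) (v : BinVec n) :
    Set (Projectivization ℂ (BinVec n)) :=
  {q | ∃ (g : SL2) (h : slAct g v ≠ 0), q = Projectivization.mk ℂ (slAct g v) h}

/-- The Zariski topology on `ℙ(V_{n₁}) × ⋯ × ℙ(V_{n_m})`, coinduced from the Zariski
topology on the locus of vectors in `⊕ᵢ V_{nᵢ}` with all components nonzero. -/
def prodPTop {m : ℕ} (n : Fin m → ℕ) :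
    TopologicalSpace ((i : Fin m) → Projectivization ℂ (Fin (n i + 1) → ℂ)) :=
  TopologicalSpace.coinduced
    (fun v : {v : BinVec n // ∀ i, v i ≠ 0} =>
      fun i => Projectivization.mk ℂ (v.1 i) (v.2 i))
    (TopologicalSpace.induced Subtype.val (vTop n))

/-- The diagonal `SL₂(ℂ)`-orbit of the point `(⟨v₁⟩, …, ⟨v_m⟩)` in
`ℙ(V_{n₁}) × ⋯ × ℙ(V_{n_m})`. -/
def prodOrbit {m : ℕ} (n : Fin m → ℕ) (v : BinVec n) :
    Set ((i : Fin m) → Projectivization ℂ (Fin (n i + 1) → ℂ)) :=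
  {q | ∃ g : SL2, ∀ i, ∃ h : slCoefAct (n i) g (v i) ≠ 0,
      q i = Projectivization.mk ℂ (slCoefAct (n i) g (v i)) h}

/-- The dimension of a subset of `V`, i.e. the topological Krull dimension of the
subspace in the Zariski topology (with `⊥` collapsed to `0`). -/
def vDim {s : ℕ} {n : Fin s → ℕ} (S : Set (BinVec n)) : ℕ∞ :=
  letI := vTop n
  WithBot.unbotD 0 (topologicalKrullDim S)

/-- `d(X, H)`: the minimal codimension in `X` of an orbit (for the orbit map `orb`)
of a point of `X`. -/
def minOrbitCodim {s : ℕ} {n : Fin s → ℕ} (X : Set (BinVec n))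
    (orb : BinVec n → Set (BinVec n)) : ℕ∞ :=
  ⨅ x ∈ X, (vDim X - vDim (orb x))

/-- The modality `mod(Y, H) = max_X d(X, H)`, the maximum over all irreducible
invariant subvarieties `X ⊆ Y`. -/
def modality {s : ℕ} {n : Fin s → ℕ} (Y : Set (BinVec n))
    (orb : BinVec n → Set (BinVec n)) : ℕ∞ :=
  ⨆ X ∈ {X : Set (BinVec n) |
      X ⊆ Y ∧ (letI := vTop n; IsIrreducible X) ∧ ∀ x ∈ X, orb x ⊆ X},
    minOrbitCodim X orb

/-- The pairing `⟨(1, χᵢ, nᵢ), R⟩` of a hatted characteristic point with a vector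
`R ∈ ℚ^{k+2}`. -/
def hatPair {k : ℕ} (χi : Fin k → ℤ) (ni : ℕ) (R : (Fin (k + 1) → ℚ) × ℚ) : ℚ :=
  R.1 0 + (∑ j, (χi j : ℚ) * R.1 j.succ) + (ni : ℚ) * R.2
/-!
Let `(τ, g) ∈ G` with first column `(κ, μ)` of `g` send `w(d₁)` to `c • w(d₂)`. On a component
`a xⁿ` the action gives `χ(τ) a (κx + μy)ⁿ`, so comparing the `x⁴`, `x³`, `x²` coefficients of the
last three components yields `τ²(d₁+1)²κ⁴ = c(d₂+1)²`, `τ³d₁(d₁+1)κ³ = c d₂(d₂+1)` and `τ⁴κ² = c`.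
Eliminating `τ`, `κ`, `c` forces `d₂ ∈ {d₁, -d₁, -1}`, so each orbit contains at most three of
the points `w(d)`, and infinitely many orbits are needed to cover the infinite family.
-/

open MvPolynomial

lemma monExp_injective (n : ℕ) : Function.Injective (monExp n) := fun _ _ h => by
  simpa [monExp] using DFunLike.congr_fun h 1

lemma ofPoly_toPoly {n : ℕ} (c : Fin (n + 1) → ℂ) : ofPoly n (toPoly c) = c := by
  funext j
  simp only [ofPoly, toPoly, coeff_sum, coeff_monomial]
  rw [Finset.sum_eq_single j (fun b _ hb => if_neg fun h => hb (Fin.ext (monExp_injective n h)))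
    (by simp), if_pos rfl]

lemma apply_zero_of_toPoly_eq {m : ℕ} {c : Fin (m + 1) → ℂ} {a : ℂ}
    (h : toPoly c = C a * X 0 ^ m) : c 0 = a := by
  rw [← ofPoly_toPoly c, h, ofPoly, X_pow_eq_monomial, C_mul_monomial, coeff_monomial, if_pos]
  · ring
  · simp [monExp]

lemma binomial_term_eq_monomial (κ μ : ℂ) (m i : ℕ) :
    (C κ * X 0 : MvPolynomial (Fin 2) ℂ) ^ i * (C μ * X 1) ^ (m - i) *
        (m.choose i : MvPolynomial (Fin 2) ℂ)
      = monomial (Finsupp.single 0 i + Finsupp.single 1 (m - i))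
          (κ ^ i * μ ^ (m - i) * (m.choose i : ℂ)) := by
  rw [mul_pow, mul_pow, X_pow_eq_monomial, X_pow_eq_monomial, ← C_pow, ← C_pow,
    C_mul_monomial, C_mul_monomial, monomial_mul, ← map_natCast C, mul_comm, C_mul_monomial]
  congr 1
  ring

lemma coeff_monExp_linear_pow (κ μ : ℂ) (m : ℕ) (j : Fin (m + 1)) :
    coeff (monExp m j) ((C κ * X 0 + C μ * X 1 : MvPolynomial (Fin 2) ℂ) ^ m)
      = (m.choose j : ℂ) * κ ^ (m - j) * μ ^ (j : ℕ) := by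
  have hj : (j : ℕ) ≤ m := Nat.lt_succ_iff.mp j.isLt
  rw [add_pow, coeff_sum, Finset.sum_eq_single (m - j)]
  · rw [binomial_term_eq_monomial, coeff_monomial, Nat.sub_sub_self hj, monExp, if_pos rfl,
      Nat.choose_symm hj]
    ring
  · intro b _ hb
    rw [binomial_term_eq_monomial, coeff_monomial, if_neg]
    exact fun h => hb (by simpa [monExp] using DFunLike.congr_fun h 0)
  · simp [Nat.lt_succ_of_le (Nat.sub_le m _)]

lemma subst_C_mul_X_zero_pow (g : SL2) (a : ℂ) (m : ℕ) :
    subst g (C a * X 0 ^ m) = C a * (C (g 0 0) * X 0 + C (g 1 0) * X 1) ^ m := by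
  simp [subst, algebraMap_eq]

lemma Gact_apply_of_toPoly_eq {k s : ℕ} (χ : Fin s → Fin k → ℤ) (n : Fin s → ℕ)
    (g : (Fin k → ℂˣ) × SL2) {v : BinVec n} {i : Fin s} {a : ℂ}
    (h : toPoly (v i) = C a * X 0 ^ n i) (j : Fin (n i + 1)) :
    Gact χ n g v i j
      = charVal (χ i) g.1 * a * ((n i).choose j : ℂ) * g.2 0 0 ^ (n i - j) * g.2 1 0 ^ (j : ℕ) := by
  rw [Gact, h, subst_C_mul_X_zero_pow, ofPoly, ← mul_assoc, ← C_mul, coeff_C_mul,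
    coeff_monExp_linear_pow]
  ring

lemma subst_one (f : MvPolynomial (Fin 2) ℂ) : subst 1 f = f := by
  have h : (fun j : Fin 2 => C (((1 : SL2) : Matrix (Fin 2) (Fin 2) ℂ) 0 j) * X 0 +
      C (((1 : SL2) : Matrix (Fin 2) (Fin 2) ℂ) 1 j) * X 1) = X := by
    funext j
    fin_cases j <;> simp
  rw [subst, h, aeval_X_left_apply]

lemma Gact_one {k s : ℕ} (χ : Fin s → Fin k → ℤ) (n : Fin s → ℕ) (v : BinVec n) :
    Gact χ n 1 v = v := by
  funext i
  simp [Gact, charVal, subst_one, ofPoly_toPoly]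

lemma charVal_mul_mul_pow_eq_of_Gact_eq_smul {k s : ℕ} (χ : Fin s → Fin k → ℤ)
    (n : Fin s → ℕ) {g : (Fin k → ℂˣ) × SL2} {c : ℂ} {v v' : BinVec n}
    (H : Gact χ n g v = c • v') {i : Fin s} {a b : ℂ} (hv : toPoly (v i) = C a * X 0 ^ n i)
    (hv' : toPoly (v' i) = C b * X 0 ^ n i) :
    charVal (χ i) g.1 * a * g.2 0 0 ^ n i = c * b := by
  simpa [Gact_apply_of_toPoly_eq χ n g hv, apply_zero_of_toPoly_eq hv'] using
    congr_fun (congr_fun H i) 0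

lemma exists_Gact_eq_smul_of_pOrbit_eq {k s : ℕ} {χ : Fin s → Fin k → ℤ} {n : Fin s → ℕ}
    {v v' : BinVec n} (hv' : v' ≠ 0) (h : pOrbit χ n v' = pOrbit χ n v) :
    ∃ (g : (Fin k → ℂˣ) × SL2) (c : ℂˣ), Gact χ n g v = (c : ℂ) • v' := by
  have hmem : Projectivization.mk ℂ v' hv' ∈ pOrbit χ n v' :=
    ⟨1, by rwa [Gact_one], by simp only [Gact_one]⟩
  obtain ⟨g, hg, hq⟩ := h ▸ hmem
  obtain ⟨c, hc⟩ := (Projectivization.mk_eq_mk_iff ℂ _ _ hv' hg).1 hq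
  exact ⟨g, c⁻¹, by rw [← hc, Units.smul_def, smul_smul, ← Units.val_mul, inv_mul_cancel,
    Units.val_one, one_smul]⟩

lemma infinite_setOf_eq_pOrbit {α : Type*} [Infinite α] {k s : ℕ} {χ : Fin s → Fin k → ℤ}
    {n : Fin s → ℕ} (w : α → BinVec n) (hw : ∀ d, w d ≠ 0)
    (hfin : ∀ d₁, {d₂ | ∃ (g : (Fin k → ℂˣ) × SL2) (c : ℂˣ),
      Gact χ n g (w d₁) = (c : ℂ) • w d₂}.Finite) :
    {o | ∃ d, o = pOrbit χ n (w d)}.Infinite := by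
  intro hS
  refine Set.infinite_univ (α := α) (Set.Finite.of_finite_fibers (fun d => pOrbit χ n (w d)) ?_ ?_)
  · simpa [Set.image_univ, Set.range, eq_comm] using hS
  · rintro _ ⟨d₁, -, rfl⟩
    exact (hfin d₁).subset fun d₂ hd₂ => exists_Gact_eq_smul_of_pOrbit_eq (hw d₂) hd₂.2

-- Eliminating `τ`, `κ` and `c` leaves `(d₂ + 1)² (d₂² - d₁²) = 0`.
lemma eq_or_eq_neg_or_eq_neg_one_of_scaling_eqs {K : Type*} [Field K] {d₁ d₂ c τ κ : K} (hc : c ≠ 0)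
    (hτ : τ ≠ 0) (h₂ : τ ^ 2 * (d₁ + 1) ^ 2 * κ ^ 4 = c * (d₂ + 1) ^ 2)
    (h₃ : τ ^ 3 * (d₁ * (d₁ + 1)) * κ ^ 3 = c * (d₂ * (d₂ + 1))) (h₄ : τ ^ 4 * κ ^ 2 = c) :
    d₂ = d₁ ∨ d₂ = -d₁ ∨ d₂ = -1 := by
  have key : (c ^ 2 * τ ^ 2) * ((d₂ + 1) ^ 2 * ((d₂ - d₁) * (d₂ + d₁))) = 0 := by
    linear_combination (c * τ ^ 2 * d₁ ^ 2) * h₂ -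
      (τ ^ 2 * (τ ^ 3 * d₁ * (d₁ + 1) * κ ^ 3 + c * (d₂ * (d₂ + 1)))) * h₃ +
      (τ ^ 4 * d₁ ^ 2 * (d₁ + 1) ^ 2 * κ ^ 4) * h₄
  rcases mul_eq_zero.1 key with h | h
  · exact absurd h (by positivity)
  rcases mul_eq_zero.1 h with h | h
  · exact Or.inr (Or.inr (by linear_combination pow_eq_zero_iff two_ne_zero |>.1 h))
  rcases mul_eq_zero.1 h with h | h
  · exact Or.inl (by linear_combination h)
  · exact Or.inr (Or.inl (by linear_combination h))

/-- **Example 1, final computation.** For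
`w(d) = ⟨(0, 0, (d+1)²x⁴, d(d+1)x³, x²)⟩ ∈ ℙ(V)`: for every `d₁` only finitely many `d₂`
have `w(d₂) ∈ G·w(d₁)`; consequently the family `{w(d)}` meets infinitely many distinct
`G`-orbits. -/
theorem example_standard_limits_in_infinitely_many_orbits
    (w : ℂ → BinVec ![1, 4, 4, 3, 2])
    (hw : ∀ d : ℂ, toPoly (w d 0) = 0 ∧ toPoly (w d 1) = 0 ∧
      toPoly (w d 2) = MvPolynomial.C ((d + 1) ^ 2) * MvPolynomial.X 0 ^ 4 ∧
      toPoly (w d 3) = MvPolynomial.C (d * (d + 1)) * MvPolynomial.X 0 ^ 3 ∧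
      toPoly (w d 4) = MvPolynomial.X 0 ^ 2) :
    (∀ d1 : ℂ,
      {d2 : ℂ | ∃ (g : (Fin 1 → ℂˣ) × SL2) (c : ℂˣ),
        Gact (![fun _ => 1, fun _ => 1, fun _ => 2, fun _ => 3, fun _ => 4] : Fin 5 → Fin 1 → ℤ)
          ![1, 4, 4, 3, 2] g (w d1) = (c : ℂ) • w d2}.Finite) ∧
    {o : Set (Projectivization ℂ (BinVec ![1, 4, 4, 3, 2])) |
      ∃ d : ℂ, o = pOrbit (![fun _ => 1, fun _ => 1, fun _ => 2, fun _ => 3, fun _ => 4] : Fin 5 → Fin 1 → ℤ)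
        ![1, 4, 4, 3, 2] (w d)}.Infinite := by
  have hw₄ : ∀ d, toPoly (w d 4) = C 1 * X 0 ^ 2 := fun d => by
    rw [(hw d).2.2.2.2, map_one, one_mul]
  have hw_ne : ∀ d, w d ≠ 0 := fun d hd => by
    simpa [hd] using apply_zero_of_toPoly_eq (hw₄ d)
  refine (fun hfin => ⟨hfin, infinite_setOf_eq_pOrbit w hw_ne hfin⟩) fun d1 => ?_
  refine (Set.toFinite {d1, -d1, -1}).subset ?_
  rintro d2 ⟨g, c, H⟩
  have h₂ : (g.1 0 : ℂ) ^ 2 * (d1 + 1) ^ 2 * g.2 0 0 ^ 4 = c * (d2 + 1) ^ 2 := by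
    simpa [charVal] using charVal_mul_mul_pow_eq_of_Gact_eq_smul _ _ H (hw d1).2.2.1 (hw d2).2.2.1
  have h₃ : (g.1 0 : ℂ) ^ 3 * (d1 * (d1 + 1)) * g.2 0 0 ^ 3 = c * (d2 * (d2 + 1)) := by
    simpa [charVal] using
      charVal_mul_mul_pow_eq_of_Gact_eq_smul _ _ H (hw d1).2.2.2.1 (hw d2).2.2.2.1
  have h₄ : (g.1 0 : ℂ) ^ 4 * g.2 0 0 ^ 2 = c := by
    simpa [charVal] using charVal_mul_mul_pow_eq_of_Gact_eq_smul _ _ H (hw₄ d1) (hw₄ d2)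
  simpa using eq_or_eq_neg_or_eq_neg_one_of_scaling_eqs c.ne_zero (g.1 0).ne_zero h₂ h₃ h₄
end
end

section
/- Let $I(R)$ be an admissible face of the cone $M$, determined by $R=(r_1,\dots,r_k,p)$ with $p<0$, and let $d_1,d_2\in\mathbb{C}$. Then the standard vectors $v(d_1,R)$ and $v(d_2,R)$ lie in the same $B$-orbit if and only if there exists $t'\in(\mathbb{C}^{\times})^{k}$ with $\chi_i(t')\,p_i(d_1)=p_i(d_2)$ for all $i\in I(R)$; equivalently, if and only if for every integer-valued vector $\beta=(\beta_i)_{i\in I(R)}$ with $\sum_{i\in I(R)}\beta_i\chi_i=0$ one has $\prod_{i\in I(R)}p_i(d_1)^{\beta_i}=\prod_{i\in I(R)}p_i(d_2)^{\beta_i}$. -/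
open scoped BigOperators

noncomputable section

/-!
The unipotent part of `B` fixes `x^{nᵢ}`, so `B` acts on a standard vector through its torus
`(ℂˣ)ᵏ × ℂˣ` by the characters `χ'ᵢ = (χᵢ, nᵢ)`: `v(d₂, R) ∈ B · v(d₁, R)` iff the ratios
`qᵢ = pᵢ(d₂) / pᵢ(d₁)`, `i ∈ I(R)`, are the values of the `χ'ᵢ` at one point. As `ℂˣ` is divisible,
hence an injective `ℤ`-module, values `qᵢ` are taken simultaneously by characters `ψᵢ` iff every
relation `∑ βᵢ ψᵢ = 0` gives `∏ qᵢ^{βᵢ} = 1`. On the face `I(R)` the relations among the `χ'ᵢ` and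
among the `χᵢ` coincide, since pairing `∑ βᵢ χᵢ = 0` with `R` leaves `p ∑ βᵢ nᵢ = 0` and `p ≠ 0`.
-/
theorem Module.Baer.exists_comp_eq_of_ker_le {R Q M N : Type*} [Ring R] [AddCommGroup Q]
    [Module R Q] [AddCommGroup M] [AddCommGroup N] [Module R M] [Module R N]
    (hQ : Module.Baer R Q) (f : M →ₗ[R] N) (g : M →ₗ[R] Q)
    (hfg : LinearMap.ker f ≤ LinearMap.ker g) : ∃ h : N →ₗ[R] Q, h ∘ₗ f = g := by
  obtain ⟨h, hh⟩ := hQ.extension_property _ (LinearMap.range f).injective_subtype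
    ((LinearMap.ker f).liftQ g hfg ∘ₗ f.quotKerEquivRange.symm.toLinearMap)
  refine ⟨h, LinearMap.ext fun x => ?_⟩
  simpa using LinearMap.congr_fun hh ⟨f x, LinearMap.mem_range_self f x⟩

theorem Finset.prod_zpow_eq_zpow_sum {ι G : Type*} [CommGroup G] (s : Finset ι) (f : ι → ℤ)
    (a : G) : ∏ i ∈ s, a ^ f i = a ^ ∑ i ∈ s, f i := by
  classical
  induction s using Finset.induction_on with
  | empty => simp
  | insert i s hi ih => rw [prod_insert hi, sum_insert hi, ih, zpow_add]

instance {K : Type*} [Field K] [IsAlgClosed K] : RootableBy Kˣ ℤ :=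
  letI : RootableBy Kˣ ℕ := rootableByOfPowLeftSurj _ _ fun {n} hn u => by
    obtain ⟨z, hz⟩ := IsAlgClosed.exists_pow_nat_eq (u : K) (Nat.pos_of_ne_zero hn)
    have hz0 : z ≠ 0 := by rintro rfl; exact u.ne_zero (by rw [← hz, zero_pow hn])
    exact ⟨Units.mk0 z hz0, Units.ext (by simpa using hz)⟩
  Group.rootableByIntOfRootableByNat _

section CharacterRelations

variable {ι κ G : Type*} [Fintype ι] [Fintype κ] [CommGroup G]

theorem prod_prod_zpow_zpow_eq_one (χ : ι → κ → ℤ) (t : κ → G) {β : ι → ℤ}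
    (hβ : ∀ j, ∑ i, β i * χ i j = 0) : ∏ i, (∏ j, t j ^ χ i j) ^ β i = 1 := by
  calc ∏ i, (∏ j, t j ^ χ i j) ^ β i = ∏ j, t j ^ ∑ i, β i * χ i j := by
        simp_rw [← Finset.prod_zpow, ← zpow_mul, ← Finset.prod_zpow_eq_zpow_sum, mul_comm]
        exact Finset.prod_comm
    _ = 1 := by simp [hβ]

theorem exists_prod_zpow_eq_of_relations [RootableBy G ℤ] (χ : ι → κ → ℤ) (q : ι → G)
    (P : ι → Prop)
    (hq : ∀ β : ι → ℤ, (∀ i, ¬P i → β i = 0) → (∀ j, ∑ i, β i * χ i j = 0) →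
      ∏ i, q i ^ β i = 1) :
    ∃ t : κ → G, ∀ i, P i → ∏ j, t j ^ χ i j = q i := by
  classical
  let _ : DivisibleBy (Additive G) ℤ :=
    { div := fun a n => .ofMul (RootableBy.root a.toMul n)
      div_zero := fun a => by rw [RootableBy.root_zero, ofMul_one]
      div_cancel := fun a hn => by rw [← ofMul_zpow, RootableBy.root_cancel _ hn, ofMul_toMul] }
  let f := Fintype.linearCombination ℤ fun i => if P i then χ i else 0
  let g := Fintype.linearCombination ℤ fun i => if P i then Additive.ofMul (q i) else 0
  have hfg : LinearMap.ker f ≤ LinearMap.ker g := by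
    intro β hβ
    have hrel := hq (fun i => if P i then β i else 0) (fun i hi => if_neg hi) fun j => by
      simpa [f, Fintype.linearCombination_apply, Finset.sum_apply, ite_apply, ite_mul] using
        congr_fun hβ j
    rw [LinearMap.mem_ker]
    apply Additive.toMul.injective
    simpa [g, Fintype.linearCombination_apply, toMul_sum, apply_ite, smul_ite] using hrel
  obtain ⟨h, hh⟩ := (Module.Baer.of_divisible _).exists_comp_eq_of_ker_le f g hfg
  refine ⟨fun j => (h fun j' => if j = j' then 1 else 0).toMul, fun i hi => ?_⟩
  have hχ : h (χ i) = .ofMul (q i) := by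
    simpa [f, g, hi, Fintype.linearCombination_apply_single] using
      LinearMap.congr_fun hh (Pi.single i 1)
  rw [← toMul_ofMul (q i), ← hχ, LinearMap.pi_apply_eq_sum_univ h, toMul_sum]
  simp only [toMul_zsmul]

theorem exists_prod_zpow_eq_iff [RootableBy G ℤ] (χ : ι → κ → ℤ) (q : ι → G) (P : ι → Prop) :
    (∃ t : κ → G, ∀ i, P i → ∏ j, t j ^ χ i j = q i) ↔
      ∀ β : ι → ℤ, (∀ i, ¬P i → β i = 0) → (∀ j, ∑ i, β i * χ i j = 0) →
        ∏ i, q i ^ β i = 1 := by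
  refine ⟨fun ⟨t, ht⟩ β hβ hrel => ?_, exists_prod_zpow_eq_of_relations χ q P⟩
  calc ∏ i, q i ^ β i = ∏ i, (∏ j, t j ^ χ i j) ^ β i := Finset.prod_congr rfl fun i _ => by
        by_cases hi : P i
        · rw [ht i hi]
        · simp [hβ i hi]
    _ = 1 := prod_prod_zpow_zpow_eq_one χ t hrel

end CharacterRelations

theorem charVal_eq_coe_prod {k : ℕ} (χi : Fin k → ℤ) (t : Fin k → ℂˣ) :
    charVal χi t = ((∏ j, t j ^ χi j : ℂˣ) : ℂ) := by
  simp [charVal]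

theorem charVal_cons {k : ℕ} (m : ℤ) (χi : Fin k → ℤ) (t : Fin (k + 1) → ℂˣ) :
    charVal (Fin.cons m χi) t = (t 0 : ℂ) ^ m * charVal χi (Fin.tail t) := by
  simp [charVal, Fin.prod_univ_succ, Fin.tail]

theorem exists_charVal_mul_eq_iff {ι : Type*} [Fintype ι] {k : ℕ} (χ : ι → Fin k → ℤ)
    {a b : ι → ℂ} (ha : ∀ i, a i ≠ 0) (hb : ∀ i, b i ≠ 0) (P : ι → Prop) :
    (∃ t : Fin k → ℂˣ, ∀ i, P i → charVal (χ i) t * a i = b i) ↔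
      ∀ β : ι → ℤ, (∀ i, ¬P i → β i = 0) → (∀ j, ∑ i, β i * χ i j = 0) →
        ∏ i, a i ^ β i = ∏ i, b i ^ β i := by
  let q i := Units.mk0 (b i) (hb i) / Units.mk0 (a i) (ha i)
  have hchar t i : charVal (χ i) t * a i = b i ↔ ∏ j, t j ^ χ i j = q i := by
    rw [eq_div_iff_mul_eq', Units.ext_iff, charVal_eq_coe_prod]
    simp
  have hprod (β : ι → ℤ) : ∏ i, a i ^ β i = ∏ i, b i ^ β i ↔ ∏ i, q i ^ β i = 1 := by
    rw [Units.ext_iff]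
    simp only [q, Units.val_one, Units.coe_prod, Units.val_zpow_eq_zpow_val,
      Units.val_div_eq_div_val, Units.val_mk0, div_zpow, Finset.prod_div_distrib]
    rw [div_eq_one_iff_eq (Finset.prod_ne_zero_iff.mpr fun i _ => zpow_ne_zero _ (ha i)), eq_comm]
  simp only [hchar, hprod]
  exact exists_prod_zpow_eq_iff χ q P

theorem exists_charVal_cons_iff {ι : Type*} {k : ℕ} (χ : ι → Fin k → ℤ) (m : ι → ℕ)
    (Q : ι → ℂ → Prop) :
    (∃ (t : Fin k → ℂˣ) (κ : ℂˣ), ∀ i, Q i ((κ : ℂ) ^ m i * charVal (χ i) t)) ↔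
      ∃ t : Fin (k + 1) → ℂˣ, ∀ i, Q i (charVal (Fin.cons (m i : ℤ) (χ i)) t) := by
  simp only [charVal_cons, zpow_natCast]
  constructor
  · rintro ⟨t, κ, h⟩
    exact ⟨Fin.cons κ t, by simpa using h⟩
  · rintro ⟨t, h⟩
    exact ⟨Fin.tail t, t 0, h⟩

theorem pval_ne_zero (e : ℂ →₀ ℕ) (d : ℂ) : pval e d ≠ 0 :=
  Finset.prod_ne_zero_iff.mpr fun _ ha =>
    pow_ne_zero _ (sub_ne_zero.mpr (Finset.notMem_singleton.mp (Finset.mem_sdiff.mp ha).2))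

section BinaryForms

open MvPolynomial

theorem monExp_eq_single_zero_iff {n : ℕ} (j : Fin (n + 1)) :
    monExp n j = Finsupp.single 0 n ↔ j = 0 := by
  constructor
  · intro h
    exact Fin.ext (by simpa [monExp, Finsupp.single_apply] using DFunLike.congr_fun h 1)
  · rintro rfl
    simp [monExp]

theorem ofPoly_C_mul_X_pow (n : ℕ) (c : ℂ) : ofPoly n (C c * X 0 ^ n) = Pi.single 0 c := by
  funext j
  simp only [ofPoly, C_mul_X_pow_eq_monomial, coeff_monomial, Pi.single_apply,
    @eq_comm _ (Finsupp.single _ _), monExp_eq_single_zero_iff]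

theorem toPoly_single_zero (n : ℕ) (c : ℂ) :
    toPoly (Pi.single 0 c : Fin (n + 1) → ℂ) = C c * X 0 ^ n := by
  rw [toPoly, Finset.sum_eq_single 0 (fun j _ hj => by simp [hj]) (by simp),
    C_mul_X_pow_eq_monomial]
  simp [monExp]

theorem subst_upperSL_C_mul_X_pow (κ : ℂˣ) (l : ℂ) (n : ℕ) (c : ℂ) :
    subst (upperSL κ l) (C c * X 0 ^ n) = C ((κ : ℂ) ^ n * c) * X 0 ^ n := by
  have h00 : (upperSL κ l : Matrix (Fin 2) (Fin 2) ℂ) 0 0 = κ := rfl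
  have h10 : (upperSL κ l : Matrix (Fin 2) (Fin 2) ℂ) 1 0 = 0 := rfl
  rw [subst, map_mul, map_pow, aeval_C, aeval_X, h00, h10, C_0, zero_mul, add_zero, algebraMap_eq,
    mul_pow, C_mul, C_pow]
  ring

theorem standardVec_apply {k s : ℕ} (χ : Fin s → Fin k → ℤ) (n : Fin s → ℕ)
    (e : Fin s → ℂ →₀ ℕ) (d : ℂ) (R : (Fin k → ℚ) × ℚ) (i : Fin s) :
    standardVec χ n e d R i =
      if pairQ (χ i) (n i) R = 0 then Pi.single 0 (pval (e i) d) else 0 := by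
  rw [standardVec, ofPoly_C_mul_X_pow]

theorem Gact_upperSL_standardVec_apply {k s : ℕ} (χ : Fin s → Fin k → ℤ) (n : Fin s → ℕ)
    (e : Fin s → ℂ →₀ ℕ) (d : ℂ) (R : (Fin k → ℚ) × ℚ) (t : Fin k → ℂˣ) (κ : ℂˣ) (l : ℂ)
    (i : Fin s) :
    Gact χ n (t, upperSL κ l) (standardVec χ n e d R) i =
      if pairQ (χ i) (n i) R = 0 then
        Pi.single 0 ((κ : ℂ) ^ n i * charVal (χ i) t * pval (e i) d)
      else 0 := by
  rw [Gact, standardVec_apply]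
  split_ifs
  · rw [toPoly_single_zero, subst_upperSL_C_mul_X_pow, ← mul_assoc, ← C_mul,
      ofPoly_C_mul_X_pow]
    ring_nf
  · funext j
    simp [toPoly, subst, ofPoly]

theorem standardVec_mem_Borbit_iff {k s : ℕ} (χ : Fin s → Fin k → ℤ) (n : Fin s → ℕ)
    (e : Fin s → ℂ →₀ ℕ) (R : (Fin k → ℚ) × ℚ) (d1 d2 : ℂ) :
    standardVec χ n e d2 R ∈ Borbit χ n (standardVec χ n e d1 R) ↔
      ∃ (t : Fin k → ℂˣ) (κ : ℂˣ), ∀ i, pairQ (χ i) (n i) R = 0 →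
        (κ : ℂ) ^ n i * charVal (χ i) t * pval (e i) d1 = pval (e i) d2 := by
  have hcomp t κ l :
      standardVec χ n e d2 R = Gact χ n (t, upperSL κ l) (standardVec χ n e d1 R) ↔
      ∀ i, pairQ (χ i) (n i) R = 0 →
        (κ : ℂ) ^ n i * charVal (χ i) t * pval (e i) d1 = pval (e i) d2 := by
    refine funext_iff.trans (forall_congr' fun i => ?_)
    rw [standardVec_apply, Gact_upperSL_standardVec_apply]
    split_ifs with hi <;> simp [hi, eq_comm]
  simp only [Borbit, Set.mem_ofPred_eq, hcomp, exists_const]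

end BinaryForms

section Face

variable {k s : ℕ} {χ : Fin s → Fin k → ℤ} {n : Fin s → ℕ} {R : (Fin k → ℚ) × ℚ}

theorem sum_mul_pairQ_eq (β : Fin s → ℤ) :
    ∑ i, (β i : ℚ) * pairQ (χ i) (n i) R =
      ∑ j, ((∑ i, β i * χ i j : ℤ) : ℚ) * R.1 j + ((∑ i, β i * (n i : ℤ) : ℤ) : ℚ) * R.2 := by
  simp only [pairQ, mul_add, Finset.sum_add_distrib, Finset.mul_sum, Int.cast_sum, Int.cast_mul,
    Finset.sum_mul, Int.cast_natCast]
  rw [Finset.sum_comm]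
  congr 1 <;> simp only [mul_assoc]

theorem sum_mul_eq_zero_of_relation (hp : R.2 ≠ 0) {β : Fin s → ℤ}
    (hβ : ∀ i, pairQ (χ i) (n i) R ≠ 0 → β i = 0) (hrel : ∀ j, ∑ i, β i * χ i j = 0) :
    ∑ i, β i * (n i : ℤ) = 0 := by
  have hsum : ∑ i, (β i : ℚ) * pairQ (χ i) (n i) R = 0 :=
    Finset.sum_eq_zero fun i _ => by
      by_cases hi : pairQ (χ i) (n i) R = 0
      · rw [hi, mul_zero]
      · rw [hβ i hi, Int.cast_zero, zero_mul]
  rw [sum_mul_pairQ_eq] at hsum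
  simp only [hrel, Int.cast_zero, zero_mul, Finset.sum_const_zero, zero_add, mul_eq_zero, hp,
    or_false] at hsum
  exact_mod_cast hsum

theorem forall_sum_mul_cons_eq_zero_iff (hp : R.2 ≠ 0) {β : Fin s → ℤ}
    (hβ : ∀ i, pairQ (χ i) (n i) R ≠ 0 → β i = 0) :
    (∀ j, ∑ i, β i * (Fin.cons (n i : ℤ) (χ i) : Fin (k + 1) → ℤ) j = 0) ↔
      ∀ j, ∑ i, β i * χ i j = 0 := by
  simp only [Fin.forall_fin_succ, Fin.cons_zero, Fin.cons_succ]
  exact ⟨And.right, fun hrel => ⟨sum_mul_eq_zero_of_relation hp hβ hrel, hrel⟩⟩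

end Face

theorem standard_vectors_same_B_orbit_iff_general (k s : ℕ) (χ : Fin s → Fin k → ℤ)
    (n : Fin s → ℕ) (e : Fin s → ℂ →₀ ℕ)
    (R : (Fin k → ℚ) × ℚ) (hp : R.2 < 0)
    (d1 d2 : ℂ) :
    (standardVec χ n e d2 R ∈ Borbit χ n (standardVec χ n e d1 R) ↔
      ∃ t' : Fin k → ℂˣ, ∀ i, pairQ (χ i) (n i) R = 0 →
        charVal (χ i) t' * pval (e i) d1 = pval (e i) d2) ∧
    (standardVec χ n e d2 R ∈ Borbit χ n (standardVec χ n e d1 R) ↔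
      ∀ β : Fin s → ℤ, (∀ i, pairQ (χ i) (n i) R ≠ 0 → β i = 0) →
        (∀ j, ∑ i, β i * χ i j = 0) →
        ∏ i, pval (e i) d1 ^ β i = ∏ i, pval (e i) d2 ^ β i) := by
  have hd1 i := pval_ne_zero (e i) d1
  have hd2 i := pval_ne_zero (e i) d2
  have hB : standardVec χ n e d2 R ∈ Borbit χ n (standardVec χ n e d1 R) ↔
      ∀ β : Fin s → ℤ, (∀ i, pairQ (χ i) (n i) R ≠ 0 → β i = 0) →
        (∀ j, ∑ i, β i * χ i j = 0) →
        ∏ i, pval (e i) d1 ^ β i = ∏ i, pval (e i) d2 ^ β i :=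
    (standardVec_mem_Borbit_iff χ n e R d1 d2).trans <|
      (exists_charVal_cons_iff χ n fun i c =>
        pairQ (χ i) (n i) R = 0 → c * pval (e i) d1 = pval (e i) d2).trans <|
      (exists_charVal_mul_eq_iff (fun i => Fin.cons (n i : ℤ) (χ i)) hd1 hd2 _).trans <|
      forall_congr' fun β => forall_congr' fun hβ => by
        rw [forall_sum_mul_cons_eq_zero_iff hp.ne hβ]
  exact ⟨hB.trans (exists_charVal_mul_eq_iff χ hd1 hd2 _).symm, hB⟩

/-- For an admissible face `I(R)` of the cone `M`, two standard vectors `v(d₁, R)` and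
`v(d₂, R)` lie in the same `B`-orbit iff there is `t' ∈ (ℂˣ)ᵏ` with
`χᵢ(t') pᵢ(d₁) = pᵢ(d₂)` for all `i ∈ I(R)`; equivalently, iff
`∏ pᵢ(d₁)^{βᵢ} = ∏ pᵢ(d₂)^{βᵢ}` for every integer vector `β` supported on `I(R)` with
`∑ βᵢ χᵢ = 0`. -/
theorem standard_vectors_same_B_orbit_iff (k s : ℕ) (χ : Fin s → Fin k → ℤ)
    (n : Fin s → ℕ) (e : Fin s → ℂ →₀ ℕ) (he : ∀ i, eInf (e i) ≤ n i)
    (R : (Fin k → ℚ) × ℚ) (hp : R.2 < 0) (hR : ∀ i, 0 ≤ pairQ (χ i) (n i) R)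
    (d1 d2 : ℂ) :
    (standardVec χ n e d2 R ∈ Borbit χ n (standardVec χ n e d1 R) ↔
      ∃ t' : Fin k → ℂˣ, ∀ i, pairQ (χ i) (n i) R = 0 →
        charVal (χ i) t' * pval (e i) d1 = pval (e i) d2) ∧
    (standardVec χ n e d2 R ∈ Borbit χ n (standardVec χ n e d1 R) ↔
      ∀ β : Fin s → ℤ, (∀ i, pairQ (χ i) (n i) R ≠ 0 → β i = 0) →
        (∀ j, ∑ i, β i * χ i j = 0) →
        ∏ i, pval (e i) d1 ^ β i = ∏ i, pval (e i) d2 ^ β i) :=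
  standard_vectors_same_B_orbit_iff_general k s χ n e R hp d1 d2
end
end
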